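/- The graph H1 on vertex set {1,2,3,4,5,6,7} with edges {1,2}, {1,3}, {1,4}, {1,5}, {3,4}, {4,5}, {3,5}, {2,5}, {3,6}, {5,6}, {6,7}, {5,7}, {4,7} is not word-representable. -/

import Mathlib

/-- Two letters `x ≠ y` alternate in the word `w` if, after deleting all other letters,
consecutive letters are always distinct (i.e. the result is `xyxy...` or `yxyx...`). -/
def Alternate {V : Type*} [DecidableEq V] (w : List V) (x y : V) : Prop :=
  (w.filter (fun z => z = x ∨ z = y)).Chain' (· ≠ ·)

/-- A graph is word-representable if some word over its vertex alphabet, containing every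
vertex, is such that two distinct letters alternate iff they are adjacent. -/
def WordRepresentable {V : Type*} [DecidableEq V] (G : SimpleGraph V) : Prop :=
  ∃ w : List V, (∀ v : V, v ∈ w) ∧ ∀ x y : V, x ≠ y → (Alternate w x y ↔ G.Adj x y)

/-- The 7-vertex graph `H1` with vertices `0,...,6` (representing `1,...,7`) and the
thirteen edges `{1,2}, {1,3}, {1,4}, {1,5}, {3,4}, {4,5}, {3,5}, {2,5}, {3,6}, {5,6},
{6,7}, {5,7}, {4,7}` (here written 0-indexed). -/
def graphH1 : SimpleGraph (Fin 7) :=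
  SimpleGraph.fromRel (fun a b => (a, b) ∈
    ([(0, 1), (0, 2), (0, 3), (0, 4), (2, 3), (3, 4), (2, 4), (1, 4),
      (2, 5), (4, 5), (5, 6), (4, 6), (3, 6)] : List (Fin 7 × Fin 7)))

/-!
Two distinct letters `x, y` alternate in `w` iff the differences `count x - count y` over the
prefixes of `w` stay in a window `{e - 1, e}`. Fix an occurrence of a vertex `v` and let `A` be
the prefix in front of it; for a neighbour `x` of `v`, the window of `x` against `v` has upper end
`count x A - count v A`. For adjacent neighbours `x, y` of `v` the value at `A` is one end of their
window; orienting `x → y` when it is the lower end is transitive, because the pinned windows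
against `v` keep `count x - count z` within `1` of its value at `A`. So the neighbourhood of every
vertex of a word-representable graph is a comparability graph, and the neighbourhood of the apex
`5` of `H1` (vertex `4` here) is not one.
-/

variable {V : Type*} [DecidableEq V]

def countDiff (x y : V) (p : List V) : ℤ := p.count x - p.count y

section countDiff

variable {x y z c : V} {p q : List V}

@[simp] lemma countDiff_nil : countDiff x y [] = 0 := by simp [countDiff]

lemma countDiff_append : countDiff x y (p ++ q) = countDiff x y p + countDiff x y q := by
  simp only [countDiff, List.count_append]; push_cast; ring

lemma countDiff_cons : countDiff x y (c :: p) = countDiff x y [c] + countDiff x y p :=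
  countDiff_append (p := [c])

lemma countDiff_swap : countDiff y x p = -countDiff x y p := by
  simp only [countDiff]; ring

lemma countDiff_add_countDiff : countDiff x y p + countDiff y z p = countDiff x z p := by
  simp only [countDiff]; ring

lemma countDiff_singleton_left (h : x ≠ y) : countDiff x y [x] = 1 := by
  simp [countDiff, h]

lemma countDiff_singleton_right (h : x ≠ y) : countDiff x y [y] = -1 := by
  simp [countDiff, h.symm]

lemma countDiff_singleton_of_ne (hx : c ≠ x) (hy : c ≠ y) : countDiff x y [c] = 0 := by
  simp [countDiff, hx, hy]

end countDiff

def PrefixBounded (w : List V) (x y : V) (e : ℤ) : Prop :=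
  ∀ p, p <+: w → countDiff x y p ∈ Set.Icc (e - 1) e

section PrefixBounded

variable {w t : List V} {x y c : V} {e : ℤ}

lemma alternate_iff_isChain :
    Alternate w x y ↔ (w.filter fun z => z = x ∨ z = y).IsChain (· ≠ ·) :=
  Iff.rfl

lemma eq_or_eq_of_mem_head?_filter {b : V}
    (hb : b ∈ (w.filter fun z => z = x ∨ z = y).head?) : b = x ∨ b = y := by
  simpa using (List.mem_filter.mp (List.mem_of_mem_head? hb)).2

lemma prefixBounded_nil : PrefixBounded [] x y e ↔ (0 : ℤ) ∈ Set.Icc (e - 1) e := by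
  simp [PrefixBounded]

lemma prefixBounded_cons :
    PrefixBounded (c :: t) x y e ↔
      (0 : ℤ) ∈ Set.Icc (e - 1) e ∧ PrefixBounded t x y (e - countDiff x y [c]) := by
  simp only [PrefixBounded, List.prefix_cons_iff, forall_eq_or_imp, countDiff_nil,
    forall_exists_index, and_imp]
  refine and_congr_right fun _ => ⟨fun h p hp => ?_, fun h _ p hcp hp => ?_⟩
  · have := h _ p rfl hp
    rw [countDiff_cons, Set.mem_Icc] at this
    rw [Set.mem_Icc]; omega
  · have := h p hp
    rw [hcp, countDiff_cons, Set.mem_Icc]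
    rw [Set.mem_Icc] at this; omega

lemma prefixBounded_swap : PrefixBounded w y x (1 - e) ↔ PrefixBounded w x y e := by
  simp only [PrefixBounded, Set.mem_Icc, countDiff_swap (x := x)]
  constructor <;> intro h p hp <;> have := h p hp <;> omega

lemma prefixBounded_iff (hxy : x ≠ y) :
    PrefixBounded w x y e ↔ Alternate w x y ∧ (0 : ℤ) ∈ Set.Icc (e - 1) e ∧
      ∀ b ∈ (w.filter fun z => z = x ∨ z = y).head?, countDiff x y [b] ∈ Set.Icc (e - 1) e := by
  induction w generalizing e with
  | nil => simp [prefixBounded_nil, alternate_iff_isChain]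
  | cons c t ih =>
    rw [prefixBounded_cons, ih]
    have hhead : ∀ b ∈ (t.filter fun z => z = x ∨ z = y).head?, b = x ∨ b = y :=
      fun _ => eq_or_eq_of_mem_head?_filter
    by_cases hc : c = x ∨ c = y
    · have hfilter : (c :: t).filter (fun z => z = x ∨ z = y) =
          c :: t.filter fun z => z = x ∨ z = y := by
        simp [hc]
      simp only [alternate_iff_isChain, hfilter, List.isChain_cons, List.head?_cons,
        Option.mem_def, Option.some.injEq, forall_eq', Set.mem_Icc] at hhead ⊢
      generalize (t.filter fun z => z = x ∨ z = y).head? = H at hhead ⊢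
      rcases hc with rfl | rfl <;> cases H <;>
        grind [countDiff_singleton_left, countDiff_singleton_right]
    · have hfilter : (c :: t).filter (fun z => z = x ∨ z = y) =
          t.filter fun z => z = x ∨ z = y := by
        simp [hc]
      rw [not_or] at hc
      simp only [alternate_iff_isChain, hfilter, countDiff_singleton_of_ne hc.1 hc.2, sub_zero]
      tauto

theorem alternate_iff_exists_prefixBounded (hxy : x ≠ y) :
    Alternate w x y ↔ ∃ e, PrefixBounded w x y e := by
  refine ⟨fun h => ?_, fun ⟨e, he⟩ => ((prefixBounded_iff hxy).1 he).1⟩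
  cases H : (w.filter fun z => z = x ∨ z = y).head? with
  | none => exact ⟨0, (prefixBounded_iff hxy).2 ⟨h, by simp, by rw [H]; simp⟩⟩
  | some b =>
    obtain rfl | rfl := eq_or_eq_of_mem_head?_filter (Option.mem_def.2 H)
    · exact ⟨1, (prefixBounded_iff hxy).2
        ⟨h, by simp, by rw [H]; simp [countDiff_singleton_left hxy]⟩⟩
    · exact ⟨0, (prefixBounded_iff hxy).2
        ⟨h, by simp, by rw [H]; simp [countDiff_singleton_right hxy]⟩⟩

end PrefixBounded

section Orientation

variable {w A B : List V} {v x y z : V} {e e' : ℤ}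

lemma PrefixBounded.countDiff_eq (hw : A ++ v :: B = w) (hxv : x ≠ v)
    (h : PrefixBounded w x v e) : countDiff x v A = e := by
  have h₁ := h A ⟨v :: B, hw⟩
  have h₂ := h (A ++ [v]) ⟨B, by simp [← hw]⟩
  rw [countDiff_append, countDiff_singleton_right hxv, Set.mem_Icc] at h₂
  rw [Set.mem_Icc] at h₁
  omega

lemma PrefixBounded.or_swap (hA : A <+: w) (h : PrefixBounded w x y e) :
    PrefixBounded w x y (countDiff x y A + 1) ∨ PrefixBounded w y x (countDiff y x A + 1) := by
  have hAe := h A hA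
  rw [Set.mem_Icc] at hAe
  obtain rfl | rfl : e = countDiff x y A + 1 ∨ e = countDiff x y A := by omega
  · exact .inl h
  · right
    rwa [countDiff_swap, neg_add_eq_sub, prefixBounded_swap]

lemma PrefixBounded.trans (hw : A ++ v :: B = w) (hxv : x ≠ v) (hzv : z ≠ v)
    (hx : PrefixBounded w x v e) (hz : PrefixBounded w z v e')
    (hxy : PrefixBounded w x y (countDiff x y A + 1))
    (hyz : PrefixBounded w y z (countDiff y z A + 1)) :
    PrefixBounded w x z (countDiff x z A + 1) := by
  have hxA := hx.countDiff_eq hw hxv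
  have hzA := hz.countDiff_eq hw hzv
  intro p hp
  have h₁ := hx p hp
  have h₂ := hz p hp
  have h₃ := hxy p hp
  have h₄ := hyz p hp
  simp only [Set.mem_Icc] at *
  have hxyz := countDiff_add_countDiff (x := x) (y := y) (z := z) (p := p)
  have hxvz := countDiff_add_countDiff (x := x) (y := v) (z := z) (p := p)
  have hxyzA := countDiff_add_countDiff (x := x) (y := y) (z := z) (p := A)
  have hxvzA := countDiff_add_countDiff (x := x) (y := v) (z := z) (p := A)
  rw [countDiff_swap (x := z)] at hxvz hxvzA
  omega

lemma PrefixBounded.not_sub_one (hx : x ∈ w) (hxy : x ≠ y) (h : PrefixBounded w x y e) :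
    ¬ PrefixBounded w x y (e - 1) := by
  intro h'
  obtain ⟨P, Q, rfl⟩ := List.append_of_mem hx
  have hP : P <+: P ++ x :: Q := ⟨x :: Q, rfl⟩
  have hPx : P ++ [x] <+: P ++ x :: Q := ⟨Q, by simp⟩
  have h₁ := h _ hP
  have h₂ := h' _ hPx
  rw [Set.mem_Icc] at h₁
  rw [countDiff_append, countDiff_singleton_left hxy, Set.mem_Icc] at h₂
  omega

lemma PrefixBounded.not_swap (hx : x ∈ w) (hxy : x ≠ y)
    (h : PrefixBounded w x y (countDiff x y A + 1)) :
    ¬ PrefixBounded w y x (countDiff y x A + 1) := by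
  rw [countDiff_swap, neg_add_eq_sub, prefixBounded_swap]
  simpa using h.not_sub_one hx hxy

end Orientation

def SimpleGraph.IsComparability {W : Type*} (H : SimpleGraph W) : Prop :=
  ∃ r : W → W → Prop, IsStrictOrder W r ∧ ∀ a b, H.Adj a b ↔ r a b ∨ r b a

theorem WordRepresentable.isComparability_induce_neighborSet {G : SimpleGraph V}
    (hG : WordRepresentable G) (v : V) : (G.induce (G.neighborSet v)).IsComparability := by
  obtain ⟨w, hmem, hrep⟩ := hG
  obtain ⟨A, B, hw⟩ := List.append_of_mem (hmem v)
  have hbound : ∀ x ∈ G.neighborSet v, ∃ e, PrefixBounded w x v e := fun x hx =>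
    (alternate_iff_exists_prefixBounded (G.ne_of_adj hx).symm).1
      ((hrep x v (G.ne_of_adj hx).symm).2 hx.symm)
  -- `a` precedes `b` when, right after `A`, the next of the two letters to occur is `a`.
  refine ⟨fun a b : G.neighborSet v => a ≠ b ∧ PrefixBounded w a b (countDiff (a : V) b A + 1),
    { irrefl := fun a h => h.1 rfl, trans := ?_ }, fun a b => ?_⟩
  · rintro a b c ⟨hab, h⟩ ⟨-, h'⟩
    obtain ⟨ea, hea⟩ := hbound a a.2
    obtain ⟨ec, hec⟩ := hbound c c.2
    refine ⟨?_, hea.trans hw.symm (G.ne_of_adj a.2).symm (G.ne_of_adj c.2).symm hec h h'⟩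
    rintro rfl
    exact h.not_swap (hmem a) (Subtype.coe_ne_coe.2 hab) h'
  · rw [SimpleGraph.induce_adj]
    constructor
    · intro hadj
      have hne := G.ne_of_adj hadj
      obtain ⟨e, he⟩ := (alternate_iff_exists_prefixBounded hne).1 ((hrep _ _ hne).2 hadj)
      exact (he.or_swap ⟨_, hw.symm⟩).imp (⟨Subtype.coe_ne_coe.1 hne, ·⟩)
        (⟨Subtype.coe_ne_coe.1 hne.symm, ·⟩)
    · rintro (⟨hab, h⟩ | ⟨hba, h⟩)
      · exact (hrep a b (Subtype.coe_ne_coe.2 hab)).1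
          ((alternate_iff_exists_prefixBounded (Subtype.coe_ne_coe.2 hab)).2 ⟨_, h⟩)
      · exact ((hrep b a (Subtype.coe_ne_coe.2 hba)).1
          ((alternate_iff_exists_prefixBounded (Subtype.coe_ne_coe.2 hba)).2 ⟨_, h⟩)).symm

section Forcing

variable {W : Type*} {H : SimpleGraph W} {r : W → W → Prop} [IsStrictOrder W r]
  {a b c : W}

lemma rel_of_rel_of_not_adj (hr : ∀ a b, H.Adj a b ↔ r a b ∨ r b a) (hbc : H.Adj b c)
    (hac : ¬ H.Adj a c) (hab : r a b) : r c b :=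
  ((hr b c).1 hbc).resolve_left fun hbc' => hac ((hr a c).2 (.inl (_root_.trans hab hbc')))

lemma rel_of_rel_of_not_adj' (hr : ∀ a b, H.Adj a b ↔ r a b ∨ r b a) (hab : H.Adj a b)
    (hbc : H.Adj b c) (hac : ¬ H.Adj a c) (hba : r b a) : r b c :=
  ((hr b c).1 hbc).resolve_right fun hcb =>
    irrefl a (_root_.trans (rel_of_rel_of_not_adj hr hab.symm (mt H.adj_symm hac) hcb) hba)

end Forcing

instance : DecidableRel graphH1.Adj := inferInstanceAs (DecidableRel (SimpleGraph.fromRel _).Adj)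

lemma graphH1_induce_neighborSet_not_isComparability :
    ¬ (graphH1.induce (graphH1.neighborSet 4)).IsComparability := by
  rintro ⟨r, hr, hadj⟩
  let u (i : Fin 7) (hi : graphH1.Adj 4 i := by decide) : graphH1.neighborSet 4 := ⟨i, hi⟩
  have inward (a b c : graphH1.neighborSet 4) (hbc : graphH1.Adj b c := by decide)
      (hac : ¬ graphH1.Adj a c := by decide) : r a b → r c b :=
    rel_of_rel_of_not_adj hadj hbc hac
  have outward (a b c : graphH1.neighborSet 4) (hab : graphH1.Adj a b := by decide)
      (hbc : graphH1.Adj b c := by decide) (hac : ¬ graphH1.Adj a c := by decide) :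
      r b a → r b c :=
    rel_of_rel_of_not_adj' hadj hab hbc hac
  -- Forcing along the induced paths 0-2-5, 2-5-6, 5-6-3, 6-3-0, 3-0-1, 1-0-2 of the link
  -- reverses the edge {0, 2}.
  have h₁ : r (u 0) (u 2) → r (u 2) (u 0) :=
    inward (u 1) (u 0) (u 2) ∘ inward (u 3) (u 0) (u 1) ∘ outward (u 6) (u 3) (u 0) ∘
      inward (u 5) (u 6) (u 3) ∘ outward (u 2) (u 5) (u 6) ∘ inward (u 0) (u 2) (u 5)
  have h₂ : r (u 2) (u 0) → r (u 0) (u 2) :=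
    outward (u 1) (u 0) (u 2) ∘ outward (u 3) (u 0) (u 1) ∘ inward (u 6) (u 3) (u 0) ∘
      outward (u 5) (u 6) (u 3) ∘ inward (u 2) (u 5) (u 6) ∘ outward (u 0) (u 2) (u 5)
  have h₀₂ : r (u 0) (u 2) ∨ r (u 2) (u 0) := (hadj _ _).1 (by decide)
  exact irrefl (u 0) <| h₀₂.elim (fun h => _root_.trans h (h₁ h)) fun h => _root_.trans (h₂ h) h

/-- The graph `H1` is not word-representable. -/
theorem graphH1_not_word_representable : ¬ WordRepresentable graphH1 := fun h =>
  graphH1_induce_neighborSet_not_isComparability (h.isComparability_induce_neighborSet 4)
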